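/- Let d ≥ 2 and let σ_cc(p) = ρ_{A₁B₁}(p) ⊗ ρ_{A₂C₁}(p) ⊗ ρ_{B₂C₂}(p) be the 3-partite pair-entangled-network state on the triangle graph, where each of the three parties A, B, C holds two qudits and each pair of parties shares a d-dimensional isotropic state of visibility p. If p ≤ 3/(3 + 2d), then σ_cc(p) is biseparable with respect to the tripartition A|B|C. -/
import Mathlib


open scoped BigOperators

noncomputable section

/-- Projector onto the `d`-dimensional maximally entangled state
`|φ⁺_d⟩ = (1/√d) ∑ᵢ |ii⟩`, as a matrix on `ℂ^d ⊗ ℂ^d`. -/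
def phiPlus (d : ℕ) : Matrix (Fin d × Fin d) (Fin d × Fin d) ℂ :=
  fun x y => if x.1 = x.2 ∧ y.1 = y.2 then (1 / (d : ℂ)) else 0

/-- The `d`-dimensional isotropic state with visibility `p`:
`ρ(p) = p φ⁺_d + (1-p) 𝟙/d²`. -/
def iso (d : ℕ) (p : ℝ) : Matrix (Fin d × Fin d) (Fin d × Fin d) ℂ :=
  (p : ℂ) • phiPlus d +
    (((1 - p) / (d : ℝ) ^ 2 : ℝ) : ℂ) • (1 : Matrix (Fin d × Fin d) (Fin d × Fin d) ℂ)

/-- The (possibly unnormalized) projector `|ψ⟩⟨ψ|` onto a vector `ψ`. -/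
def vecProj {ι : Type} (ψ : ι → ℂ) : Matrix ι ι ℂ :=
  fun i j => ψ i * (starRingEnd ℂ) (ψ j)

/-- A pure tripartite vector factors across the bipartition `A|BC`. -/
def factorsA {α β γ : Type} (ψ : α × β × γ → ℂ) : Prop :=
  ∃ (f : α → ℂ) (g : β × γ → ℂ), ∀ a b c, ψ (a, b, c) = f a * g (b, c)

/-- A pure tripartite vector factors across the bipartition `B|AC`. -/
def factorsB {α β γ : Type} (ψ : α × β × γ → ℂ) : Prop :=
  ∃ (f : β → ℂ) (g : α × γ → ℂ), ∀ a b c, ψ (a, b, c) = f b * g (a, c)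

/-- A pure tripartite vector factors across the bipartition `C|AB`. -/
def factorsC {α β γ : Type} (ψ : α × β × γ → ℂ) : Prop :=
  ∃ (f : γ → ℂ) (g : α × β → ℂ), ∀ a b c, ψ (a, b, c) = f c * g (a, b)

/-- A tripartite density matrix (parties `A`, `B`, `C`) is biseparable if it is a finite
convex combination of projectors onto normalized pure states, each of which factors
across one of the three bipartitions `A|BC`, `B|AC`, `C|AB`. -/
def Bisep3 {α β γ : Type} [Fintype α] [Fintype β] [Fintype γ]
    (ρ : Matrix (α × β × γ) (α × β × γ) ℂ) : Prop :=
  ∃ (k : ℕ) (w : Fin k → ℝ) (ψ : Fin k → α × β × γ → ℂ),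
    (∀ t, 0 ≤ w t) ∧ (∑ t, w t = 1) ∧
    (∀ t, factorsA (ψ t) ∨ factorsB (ψ t) ∨ factorsC (ψ t)) ∧
    (∀ t, ∑ x, Complex.normSq (ψ t x) = 1) ∧
    ρ = ∑ t, (w t : ℂ) • vecProj (ψ t)

/-- The 3-partite triangle PEN state
`σ_cc(p) = ρ_{A₁B₁}(p) ⊗ ρ_{A₂C₁}(p) ⊗ ρ_{B₂C₂}(p)`.
Party `A` holds `(a₁, a₂)`, party `B` holds `(b₁, b₂)`, party `C` holds `(c₁, c₂)`;
the global index is `((a₁, a₂), (b₁, b₂), (c₁, c₂))`. -/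
def sigmaCC (d : ℕ) (p : ℝ) :
    Matrix ((Fin d × Fin d) × (Fin d × Fin d) × Fin d × Fin d)
           ((Fin d × Fin d) × (Fin d × Fin d) × Fin d × Fin d) ℂ :=
  fun x y =>
    iso d p (x.1.1, x.2.1.1) (y.1.1, y.2.1.1) *
      (iso d p (x.1.2, x.2.2.1) (y.1.2, y.2.2.1) *
        iso d p (x.2.1.2, x.2.2.2) (y.2.1.2, y.2.2.2))

namespace PEN

def ω : ℂ := ⟨-1/2, Real.sqrt 3 / 2⟩

lemma sqrt3_sq : Real.sqrt 3 * Real.sqrt 3 = 3 := Real.mul_self_sqrt (by norm_num)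

lemma omega_sum : ω ^ 2 + ω + 1 = 0 := by
  have h := sqrt3_sq
  simp only [ω, pow_two, Complex.ext_iff, Complex.add_re, Complex.add_im, Complex.mul_re,
    Complex.mul_im, Complex.one_re, Complex.one_im, Complex.zero_re, Complex.zero_im]
  constructor <;> nlinarith [h]

lemma omega_cube : ω ^ 3 = 1 := by
  have h : ω ^ 3 - 1 = (ω - 1) * (ω ^ 2 + ω + 1) := by ring
  rw [omega_sum, mul_zero, sub_eq_zero] at h
  exact h

lemma omega_normSq : Complex.normSq ω = 1 := by
  have h := sqrt3_sq
  simp [ω, Complex.normSq_apply]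
  nlinarith [h]

lemma omega_ne_zero : ω ≠ 0 := by
  intro h
  have := omega_cube
  rw [h] at this
  simp at this

lemma omega_conj : (starRingEnd ℂ) ω = ω ^ 2 := by
  have h1 : ω * (starRingEnd ℂ) ω = 1 := by
    rw [Complex.mul_conj, omega_normSq]; norm_num
  have h2 : ω * ω ^ 2 = 1 := by rw [← pow_succ']; exact omega_cube
  exact mul_left_cancel₀ omega_ne_zero (h1.trans h2.symm)

lemma omega_conj_pow (n : ℕ) : (starRingEnd ℂ) (ω ^ n) = ω ^ (2 * n) := by
  rw [map_pow, omega_conj, ← pow_mul, mul_comm]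

lemma omega_pow_mod (c : ℕ) : ω ^ c = ω ^ (c % 3) := by
  conv_lhs => rw [← Nat.div_add_mod c 3]
  rw [pow_add, pow_mul, omega_cube, one_pow, one_mul]

lemma char3 (c : ℕ) : ∑ z : Fin 3, ω ^ (c * (z : ℕ)) = if c % 3 = 0 then 3 else 0 := by
  rw [Fin.sum_univ_three]
  show ω ^ (c * ((0 : Fin 3) : ℕ)) + ω ^ (c * ((1 : Fin 3) : ℕ)) + ω ^ (c * ((2 : Fin 3) : ℕ)) = _
  norm_num
  have h1 : ω ^ c = ω ^ (c % 3) := omega_pow_mod c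
  have h2 : ω ^ (c * 2) = (ω ^ c) ^ 2 := by rw [pow_mul]
  rw [h2, h1]
  have hlt : c % 3 < 3 := Nat.mod_lt _ (by norm_num)
  interval_cases h : c % 3 <;> simp
  · norm_num
  · linear_combination omega_sum
  · linear_combination omega_sum + ω * omega_cube

/-! ## vectors -/

variable {d : ℕ}

def vPhase (d : ℕ) (φ : Fin d → Fin 3) : Fin d × Fin d → ℂ :=
  fun x => ω ^ (φ x.1 : ℕ) * ω ^ (2 * (φ x.2 : ℕ)) * (d : ℂ)⁻¹

def vBasis (d : ℕ) (ij : Fin d × Fin d) : Fin d × Fin d → ℂ :=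
  fun x => if x = ij then 1 else 0

def vUnit (d : ℕ) : Fin d × Fin d → ℂ :=
  fun x => if (x.1 : ℕ) = 0 ∧ (x.2 : ℕ) = 0 then 1 else 0

def vMax (d : ℕ) : Fin d × Fin d → ℂ :=
  fun x => if x.1 = x.2 then (((Real.sqrt d)⁻¹ : ℝ) : ℂ) else 0

lemma vUnit_eq (hd : 0 < d) : vUnit d = vBasis d (⟨0, hd⟩, ⟨0, hd⟩) := by
  funext x
  simp only [vUnit, vBasis]
  apply if_congr _ rfl rfl
  simp [Prod.ext_iff, Fin.ext_iff]

/-! ## projector entries -/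

lemma vecProj_vBasis (ij x y : Fin d × Fin d) :
    vecProj (vBasis d ij) x y = if x = ij ∧ y = ij then 1 else 0 := by
  simp only [vecProj, vBasis, apply_ite (starRingEnd ℂ), map_one, map_zero]
  split_ifs with h1 h2 h3 h4 <;> simp_all

lemma sum_vecProj_vBasis (x y : Fin d × Fin d) :
    ∑ ij : Fin d × Fin d, vecProj (vBasis d ij) x y = if x = y then 1 else 0 := by
  simp_rw [vecProj_vBasis]
  have h : ∀ ij : Fin d × Fin d, (x = ij ∧ y = ij) ↔ (ij = x ∧ y = x) := by
    intro ij; constructor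
    · rintro ⟨rfl, h⟩; exact ⟨rfl, h⟩
    · rintro ⟨rfl, h⟩; exact ⟨rfl, h⟩
  simp_rw [h, ite_and]
  rw [Finset.sum_ite_eq' Finset.univ x (fun _ => if y = x then (1:ℂ) else 0)]
  simp [eq_comm]

lemma sum_vecProj_diag (x y : Fin d × Fin d) :
    ∑ i : Fin d, vecProj (vBasis d (i, i)) x y
      = if x.1 = x.2 ∧ x = y then 1 else 0 := by
  simp_rw [vecProj_vBasis]
  have h : ∀ i : Fin d, (x = (i, i) ∧ y = (i, i)) ↔ (i = x.1 ∧ (x.1 = x.2 ∧ x = y)) := by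
    intro i; constructor
    · rintro ⟨rfl, h⟩; simp_all [Prod.ext_iff]
    · rintro ⟨rfl, h1, rfl⟩
      refine ⟨?_, ?_⟩ <;> simp_all [Prod.ext_iff]
  simp_rw [h, ite_and]
  rw [Finset.sum_ite_eq' Finset.univ x.1
    (fun _ => if x.1 = x.2 then if x = y then (1:ℂ) else 0 else 0)]
  simp [ite_and]

lemma vecProj_vMax (hd : 0 < d) (x y : Fin d × Fin d) :
    vecProj (vMax d) x y = if x.1 = x.2 ∧ y.1 = y.2 then ((d : ℂ))⁻¹ else 0 := by
  simp only [vecProj, vMax, apply_ite (starRingEnd ℂ), Complex.conj_ofReal, map_zero]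
  split_ifs with h1 h2 h3 h4 <;> simp_all
  rw [← Complex.ofReal_inv, ← Complex.ofReal_mul, ← mul_inv,
    Real.mul_self_sqrt (Nat.cast_nonneg d)]
  push_cast
  ring

/-! ## norms -/

lemma norm_vPhase (hd : 0 < d) (φ : Fin d → Fin 3) :
    ∑ x : Fin d × Fin d, Complex.normSq (vPhase d φ x) = 1 := by
  have hd0 : ((d:ℝ)) ≠ 0 := Nat.cast_ne_zero.mpr hd.ne'
  have h : ∀ x : Fin d × Fin d, Complex.normSq (vPhase d φ x) = ((d:ℝ) * (d:ℝ))⁻¹ := by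
    intro x
    simp only [vPhase, map_mul, map_pow, omega_normSq, one_pow, map_inv₀, one_mul]
    rw [show ((d:ℂ)) = (((d:ℝ)):ℂ) by push_cast; rfl, Complex.normSq_ofReal]
  simp only [h]
  rw [Finset.sum_const, Finset.card_univ, Fintype.card_prod, Fintype.card_fin, nsmul_eq_mul]
  push_cast
  field_simp


lemma norm_vBasis (ij : Fin d × Fin d) :
    ∑ x : Fin d × Fin d, Complex.normSq (vBasis d ij x) = 1 := by
  simp only [vBasis, apply_ite Complex.normSq, map_one, map_zero]
  rw [Finset.sum_ite_eq' Finset.univ ij (fun _ => (1:ℝ))]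
  simp

lemma norm_vUnit (hd : 0 < d) :
    ∑ x : Fin d × Fin d, Complex.normSq (vUnit d x) = 1 := by
  rw [vUnit_eq hd]; exact norm_vBasis _

lemma norm_vMax (hd : 0 < d) :
    ∑ x : Fin d × Fin d, Complex.normSq (vMax d x) = 1 := by
  have hd0 : ((d:ℝ)) ≠ 0 := Nat.cast_ne_zero.mpr hd.ne'
  simp only [vMax, apply_ite Complex.normSq, Complex.normSq_ofReal, map_zero]
  rw [Fintype.sum_prod_type]
  have h : ∀ i : Fin d, (∑ j : Fin d, if i = j then (Real.sqrt d)⁻¹ * (Real.sqrt d)⁻¹ else 0)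
      = (d:ℝ)⁻¹ := by
    intro i
    rw [Finset.sum_ite_eq Finset.univ i (fun _ => (Real.sqrt d)⁻¹ * (Real.sqrt d)⁻¹)]
    simp [← mul_inv, Real.mul_self_sqrt (Nat.cast_nonneg d)]
  simp only [h]
  rw [Finset.sum_const, Finset.card_univ, Fintype.card_fin, nsmul_eq_mul]
  field_simp

/-! ## the character sum -/

def cExp (i j k l m : Fin d) : ℕ :=
  (if m = i then 1 else 0) + 2 * (if m = j then 1 else 0)
    + 2 * (if m = k then 1 else 0) + 4 * (if m = l then 1 else 0)

lemma cExp_mod (i j k l m : Fin d) :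
    cExp i j k l m % 3 = 0 ↔
      ((if m = i then 1 else 0) + (if m = l then 1 else 0) : ℕ)
        = (if m = j then 1 else 0) + (if m = k then 1 else 0) := by
  unfold cExp
  split_ifs <;> first | omega | simp

lemma comb (i j k l : Fin d) :
    (∀ m : Fin d, ((if m = i then 1 else 0) + (if m = l then 1 else 0) : ℕ)
        = (if m = j then 1 else 0) + (if m = k then 1 else 0))
      ↔ ((i = j ∧ k = l) ∨ (i = k ∧ j = l)) := by
  constructor
  · intro h
    by_cases hij : i = j
    · subst hij
      left
      refine ⟨rfl, ?_⟩
      by_contra hkl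
      have hlk : ¬ (l = k) := fun hh => hkl hh.symm
      have hl := h l
      by_cases h1 : l = i
      · have h2 : ¬ (i = k) := fun hh => hlk (h1.trans hh)
        simp [h1, h2, hlk] at hl
      · simp [h1, hlk] at hl
    · right
      have hji : ¬ (j = i) := fun hh => hij hh.symm
      have hik : i = k := by
        by_contra hik
        have hi := h i
        by_cases h1 : i = l
        · have h2 : ¬ (l = j) := fun hh => hij (h1.trans hh)
          have h3 : ¬ (l = k) := fun hh => hik (h1.trans hh)
          simp [hij, hik, h1, h2, h3] at hi
        · simp [hij, hik, h1] at hi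
      refine ⟨hik, ?_⟩
      subst hik
      by_contra hjl
      have hj := h j
      simp [hji, hjl] at hj
  · rintro (⟨rfl, rfl⟩ | ⟨rfl, rfl⟩) <;> intro m <;> split_ifs <;> omega

lemma keyPhase (hd : 0 < d) (i j k l : Fin d) :
    ∑ φ : Fin d → Fin 3, vecProj (vPhase d φ) (i, j) (k, l)
      = ((3:ℂ) ^ d * (((d:ℂ)) ^ 2)⁻¹) *
          (if (i = j ∧ k = l) ∨ (i = k ∧ j = l) then 1 else 0) := by
  have hent : ∀ φ : Fin d → Fin 3, vecProj (vPhase d φ) (i, j) (k, l)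
      = (∏ m : Fin d, ω ^ (cExp i j k l m * ((φ m : ℕ)))) * (((d:ℂ)) ^ 2)⁻¹ := by
    intro φ
    have hexp : ((φ i : ℕ)) + 2 * (φ j : ℕ) + (2 * (φ k : ℕ) + 4 * (φ l : ℕ))
        = ∑ m : Fin d, cExp i j k l m * ((φ m : ℕ)) := by
      unfold cExp
      simp only [add_mul, ite_mul, one_mul, zero_mul, mul_assoc, Finset.sum_add_distrib,
        ← Finset.mul_sum, Finset.sum_ite_eq', Finset.mem_univ, if_true]
      ring
    rw [Finset.prod_pow_eq_pow_sum, ← hexp]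
    simp only [vecProj, vPhase, map_mul, omega_conj_pow, map_inv₀]
    have hcd : (starRingEnd ℂ) ((d:ℂ)) = ((d:ℂ)) := by
      rw [show ((d:ℂ)) = (((d:ℝ)):ℂ) by push_cast; rfl, Complex.conj_ofReal]
    rw [hcd, show (2 * (2 * ((φ l : ℕ)))) = 4 * ((φ l : ℕ)) by ring, pow_add, pow_add]
    ring
  simp only [hent]
  rw [← Finset.sum_mul, ← Fintype.piFinset_univ,
    ← Finset.prod_univ_sum (fun _ : Fin d => (Finset.univ : Finset (Fin 3)))
      (fun m z => ω ^ (cExp i j k l m * (z : ℕ)))]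
  simp_rw [char3]
  by_cases hP : (i = j ∧ k = l) ∨ (i = k ∧ j = l)
  · rw [if_pos hP]
    have hall : ∀ m, (cExp i j k l m) % 3 = 0 :=
      fun m => (cExp_mod i j k l m).mpr ((comb i j k l).mpr hP m)
    rw [Finset.prod_congr rfl (fun m _ => if_pos (hall m) :
      ∀ m ∈ Finset.univ, (if cExp i j k l m % 3 = 0 then (3:ℂ) else 0) = 3)]
    rw [Finset.prod_const, Finset.card_univ, Fintype.card_fin]
    ring
  · rw [if_neg hP]
    have hex : ¬ ∀ m : Fin d, ((if m = i then 1 else 0) + (if m = l then 1 else 0) : ℕ)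
        = (if m = j then 1 else 0) + (if m = k then 1 else 0) :=
      fun hall => hP ((comb i j k l).mp hall)
    push_neg at hex
    obtain ⟨m, hm⟩ := hex
    have hm' : ¬ (cExp i j k l m % 3 = 0) := fun hh => hm ((cExp_mod i j k l m).mp hh)
    rw [Finset.prod_eq_zero (Finset.mem_univ m)
      (if_neg hm' : (if cExp i j k l m % 3 = 0 then (3:ℂ) else 0) = 0)]
    ring


lemma iso_apply (d : ℕ) (v : ℝ) (x y : Fin d × Fin d) :
    iso d v x y = (v : ℂ) * (if x.1 = x.2 ∧ y.1 = y.2 then ((d:ℂ))⁻¹ else 0)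
      + (1 - (v : ℂ)) * (((d:ℂ)) ^ 2)⁻¹ * (if x = y then 1 else 0) := by
  simp only [iso, Matrix.add_apply, Matrix.smul_apply, smul_eq_mul, phiPlus, Matrix.one_apply,
    mul_ite, mul_zero, mul_one]
  push_cast
  split_ifs <;> ring

structure LinkRepr (d : ℕ) (v : ℝ) where
  ι : Type
  [fin : Fintype ι]
  w : ι → ℝ
  ψ : ι → Fin d × Fin d → ℂ
  nonneg : ∀ i, 0 ≤ w i
  wsum : ∑ i, w i = 1
  norm : ∀ i, ∑ x, Complex.normSq (ψ i x) = 1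
  repr : iso d v = ∑ i, ((w i : ℝ) : ℂ) • vecProj (ψ i)

attribute [instance] LinkRepr.fin

def LinkRepr.IsProd {d : ℕ} {v : ℝ} (R : LinkRepr d v) : Prop :=
  ∀ i, ∃ f g : Fin d → ℂ, ∀ a b, R.ψ i (a, b) = f a * g b

def sepRepr (d : ℕ) (hd : 0 < d) (s : ℝ) (h0 : 0 ≤ s) (h1 : s * (d + 1) ≤ 1) :
    LinkRepr d s where
  ι := (Fin d → Fin 3) ⊕ ((Fin d) ⊕ (Fin d × Fin d))
  w := Sum.elim (fun _ => s * d / 3 ^ d)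
        (Sum.elim (fun _ => s / d) (fun _ => (1 - s * (d + 1)) / d ^ 2))
  ψ := Sum.elim (vPhase d) (Sum.elim (fun i => vBasis d (i, i)) (fun ij => vBasis d ij))
  nonneg := by
    rintro (φ | i | ij)
    · exact div_nonneg (mul_nonneg h0 (Nat.cast_nonneg d)) (by positivity)
    · exact div_nonneg h0 (Nat.cast_nonneg d)
    · exact div_nonneg (by linarith) (by positivity)
  wsum := by
    have hd0 : ((d:ℝ)) ≠ 0 := Nat.cast_ne_zero.mpr hd.ne'
    have h3 : ((3:ℝ)) ^ d ≠ 0 := by positivity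
    rw [Fintype.sum_sum_type, Fintype.sum_sum_type]
    simp only [Sum.elim_inl, Sum.elim_inr, Finset.sum_const, Finset.card_univ,
      Fintype.card_fun, Fintype.card_fin, Fintype.card_prod, nsmul_eq_mul]
    push_cast
    field_simp
    ring
  norm := by
    rintro (φ | i | ij)
    · exact norm_vPhase hd φ
    · exact norm_vBasis _
    · exact norm_vBasis _
  repr := by
    apply Matrix.ext
    rintro ⟨i, j⟩ ⟨k, l⟩
    rw [Matrix.sum_apply, Fintype.sum_sum_type, Fintype.sum_sum_type]
    simp only [Sum.elim_inl, Sum.elim_inr, Matrix.smul_apply, smul_eq_mul, ← Finset.mul_sum]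
    rw [keyPhase hd i j k l, sum_vecProj_vBasis (i, j) (k, l), sum_vecProj_diag (i, j) (k, l),
      iso_apply]
    have hpq : ((i, j) = (k, l)) ↔ (i = k ∧ j = l) := by simp [Prod.ext_iff]
    simp only [hpq]
    push_cast
    by_cases hij : i = j <;> by_cases hkl : k = l <;> by_cases hik : i = k <;>
      by_cases hjl : j = l <;> simp_all
    all_goals (
      have hd1 : ((d:ℂ)) ≠ 0 := Nat.cast_ne_zero.mpr hd.ne'
      have h31 : ((3:ℂ)) ^ d ≠ 0 := pow_ne_zero _ (by norm_num)
      field_simp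
      try ring)

def mixRepr (d : ℕ) (hd : 0 < d) (t : ℝ) (h0 : 0 ≤ t) (h1 : t ≤ 1) :
    LinkRepr d t where
  ι := Unit ⊕ (Fin d × Fin d)
  w := Sum.elim (fun _ => t) (fun _ => (1 - t) / d ^ 2)
  ψ := Sum.elim (fun _ => vMax d) (fun ij => vBasis d ij)
  nonneg := by
    rintro (u | ij)
    · exact h0
    · exact div_nonneg (by linarith) (by positivity)
  wsum := by
    have hd0 : ((d:ℝ)) ≠ 0 := Nat.cast_ne_zero.mpr hd.ne'
    rw [Fintype.sum_sum_type]
    simp only [Sum.elim_inl, Sum.elim_inr, Finset.sum_const, Finset.card_univ,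
      Fintype.card_unit, Fintype.card_prod, Fintype.card_fin, nsmul_eq_mul]
    push_cast
    field_simp
    ring
  norm := by
    rintro (u | ij)
    · exact norm_vMax hd
    · exact norm_vBasis _
  repr := by
    have hd0 : ((d:ℂ)) ≠ 0 := Nat.cast_ne_zero.mpr hd.ne'
    apply Matrix.ext
    rintro ⟨i, j⟩ ⟨k, l⟩
    rw [Matrix.sum_apply, Fintype.sum_sum_type]
    simp only [Sum.elim_inl, Sum.elim_inr, Matrix.smul_apply, smul_eq_mul, ← Finset.mul_sum]
    rw [sum_vecProj_vBasis (i, j) (k, l), iso_apply]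
    simp only [Finset.sum_const, Finset.card_univ, Fintype.card_unit, one_smul]
    rw [vecProj_vMax hd (i, j) (k, l)]
    push_cast
    ring

lemma sepRepr_isProd (d : ℕ) (hd : 0 < d) (s : ℝ) (h0 : 0 ≤ s) (h1 : s * (d + 1) ≤ 1) :
    (sepRepr d hd s h0 h1).IsProd := by
  rintro (φ | i | ij)
  · exact ⟨fun a => ω ^ ((φ a : ℕ)) * (d : ℂ)⁻¹, fun b => ω ^ (2 * (φ b : ℕ)),
      fun a b => by simp [sepRepr, vPhase]; ring⟩
  · exact ⟨fun a => if a = i then 1 else 0, fun b => if b = i then 1 else 0,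
      fun a b => by
        simp only [sepRepr, Sum.elim_inl, Sum.elim_inr, vBasis, Prod.ext_iff]
        split_ifs <;> simp_all⟩
  · exact ⟨fun a => if a = ij.1 then 1 else 0, fun b => if b = ij.2 then 1 else 0,
      fun a b => by
        simp only [sepRepr, Sum.elim_inl, Sum.elim_inr, vBasis, Prod.ext_iff]
        split_ifs <;> simp_all⟩


/-! ## assembling tripartite decompositions -/

lemma bisep3_of {α β γ : Type} [Fintype α] [Fintype β] [Fintype γ]
    (ρ : Matrix (α × β × γ) (α × β × γ) ℂ) (ι : Type) [Fintype ι]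
    (w : ι → ℝ) (ψ : ι → α × β × γ → ℂ)
    (h0 : ∀ i, 0 ≤ w i) (h1 : ∑ i, w i = 1)
    (hf : ∀ i, factorsA (ψ i) ∨ factorsB (ψ i) ∨ factorsC (ψ i))
    (hn : ∀ i, ∑ x, Complex.normSq (ψ i x) = 1)
    (hρ : ρ = ∑ i, ((w i : ℝ) : ℂ) • vecProj (ψ i)) : Bisep3 ρ := by
  have e := Fintype.equivFin ι
  refine ⟨Fintype.card ι, w ∘ e.symm, ψ ∘ e.symm, fun t => h0 _, ?_, fun t => hf _,
    fun t => hn _, ?_⟩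
  · rw [← h1]
    exact Equiv.sum_comp e.symm w
  · rw [hρ, ← Equiv.sum_comp e.symm (fun i => ((w i : ℝ) : ℂ) • vecProj (ψ i))]
    rfl

lemma bisep3_convex {α β γ : Type} [Fintype α] [Fintype β] [Fintype γ]
    (n : ℕ) (c : Fin n → ℝ) (ρ : Fin n → Matrix (α × β × γ) (α × β × γ) ℂ)
    (hc : ∀ i, 0 ≤ c i) (hc1 : ∑ i, c i = 1) (h : ∀ i, Bisep3 (ρ i)) :
    Bisep3 (∑ i, ((c i : ℝ) : ℂ) • ρ i) := by
  choose k w ψ hw0 hw1 hf hn hrepr using h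
  apply bisep3_of _ ((i : Fin n) × Fin (k i)) (fun t => c t.1 * w t.1 t.2)
    (fun t => ψ t.1 t.2)
  · exact fun t => mul_nonneg (hc t.1) (hw0 t.1 t.2)
  · rw [← Finset.univ_sigma_univ, Finset.sum_sigma]
    simp only [← Finset.mul_sum]
    simp only [hw1, mul_one]
    exact hc1
  · exact fun t => hf t.1 t.2
  · exact fun t => hn t.1 t.2
  · rw [← Finset.univ_sigma_univ, Finset.sum_sigma]
    apply Finset.sum_congr rfl
    intro i _
    rw [hrepr i, Finset.smul_sum]
    apply Finset.sum_congr rfl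
    intro j _
    rw [smul_smul]
    push_cast
    rfl

lemma sum_prod3 {R : Type*} [CommSemiring R] {ι1 ι2 ι3 : Type*}
    [Fintype ι1] [Fintype ι2] [Fintype ι3] (f : ι1 → R) (g : ι2 → R) (h : ι3 → R) :
    ∑ t : ι1 × ι2 × ι3, f t.1 * (g t.2.1 * h t.2.2)
      = (∑ u, f u) * ((∑ u, g u) * (∑ u, h u)) := by
  rw [Fintype.sum_prod_type]
  simp only [Fintype.sum_prod_type, ← Finset.mul_sum, ← Finset.sum_mul]

abbrev Idx (d : ℕ) := (Fin d × Fin d) × (Fin d × Fin d) × Fin d × Fin d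

def linkEquiv (d : ℕ) : Idx d ≃ (Fin d × Fin d) × (Fin d × Fin d) × (Fin d × Fin d) where
  toFun x := ((x.1.1, x.2.1.1), (x.1.2, x.2.2.1), (x.2.1.2, x.2.2.2))
  invFun y := ((y.1.1, y.2.1.1), ((y.1.2, y.2.2.1), (y.2.1.2, y.2.2.2)))
  left_inv := fun ⟨⟨a1,a2⟩,⟨⟨b1,b2⟩,⟨c1,c2⟩⟩⟩ => rfl
  right_inv := fun ⟨⟨a1,b1⟩,⟨⟨a2,c1⟩,⟨b2,c2⟩⟩⟩ => rfl

lemma sum_links {R : Type*} [CommSemiring R] {d : ℕ} (F G H : Fin d × Fin d → R) :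
    ∑ x : Idx d, F (x.1.1, x.2.1.1) * (G (x.1.2, x.2.2.1) * H (x.2.1.2, x.2.2.2))
      = (∑ u, F u) * ((∑ u, G u) * (∑ u, H u)) := by
  calc ∑ x : Idx d, F (x.1.1, x.2.1.1) * (G (x.1.2, x.2.2.1) * H (x.2.1.2, x.2.2.2))
      = ∑ x : Idx d, (fun y : (Fin d × Fin d) × (Fin d × Fin d) × (Fin d × Fin d) =>
          F y.1 * (G y.2.1 * H y.2.2)) (linkEquiv d x) :=
        Finset.sum_congr rfl (fun x _ => rfl)
    _ = ∑ y : (Fin d × Fin d) × (Fin d × Fin d) × (Fin d × Fin d),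
          F y.1 * (G y.2.1 * H y.2.2) := by
        exact Equiv.sum_comp (linkEquiv d) (fun y => F y.1 * (G y.2.1 * H y.2.2))
    _ = _ := sum_prod3 F G H

def triVec {d : ℕ} (ψ1 ψ2 ψ3 : Fin d × Fin d → ℂ) : Idx d → ℂ :=
  fun x => ψ1 (x.1.1, x.2.1.1) * (ψ2 (x.1.2, x.2.2.1) * ψ3 (x.2.1.2, x.2.2.2))

lemma vecProj_triVec {d : ℕ} (ψ1 ψ2 ψ3 : Fin d × Fin d → ℂ) (x y : Idx d) :
    vecProj (triVec ψ1 ψ2 ψ3) x y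
      = vecProj ψ1 (x.1.1, x.2.1.1) (y.1.1, y.2.1.1) *
          (vecProj ψ2 (x.1.2, x.2.2.1) (y.1.2, y.2.2.1) *
            vecProj ψ3 (x.2.1.2, x.2.2.2) (y.2.1.2, y.2.2.2)) := by
  simp only [vecProj, triVec, map_mul]
  ring

def triMat (d : ℕ) (v1 v2 v3 : ℝ) : Matrix (Idx d) (Idx d) ℂ :=
  fun x y =>
    iso d v1 (x.1.1, x.2.1.1) (y.1.1, y.2.1.1) *
      (iso d v2 (x.1.2, x.2.2.1) (y.1.2, y.2.2.1) *
        iso d v3 (x.2.1.2, x.2.2.2) (y.2.1.2, y.2.2.2))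

lemma triMat_repr {d : ℕ} {v1 v2 v3 : ℝ} (R1 : LinkRepr d v1) (R2 : LinkRepr d v2)
    (R3 : LinkRepr d v3) :
    triMat d v1 v2 v3 = ∑ t : R1.ι × R2.ι × R3.ι,
      (((R1.w t.1 * (R2.w t.2.1 * R3.w t.2.2) : ℝ)) : ℂ) •
        vecProj (triVec (R1.ψ t.1) (R2.ψ t.2.1) (R3.ψ t.2.2)) := by
  apply Matrix.ext
  intro x y
  rw [Matrix.sum_apply]
  have hsummand : ∀ t : R1.ι × R2.ι × R3.ι,
      ((((R1.w t.1 * (R2.w t.2.1 * R3.w t.2.2) : ℝ)) : ℂ) •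
        vecProj (triVec (R1.ψ t.1) (R2.ψ t.2.1) (R3.ψ t.2.2))) x y
      = (((R1.w t.1 : ℝ) : ℂ) * vecProj (R1.ψ t.1) (x.1.1, x.2.1.1) (y.1.1, y.2.1.1)) *
        ((((R2.w t.2.1 : ℝ) : ℂ) * vecProj (R2.ψ t.2.1) (x.1.2, x.2.2.1) (y.1.2, y.2.2.1)) *
         (((R3.w t.2.2 : ℝ) : ℂ) * vecProj (R3.ψ t.2.2) (x.2.1.2, x.2.2.2) (y.2.1.2, y.2.2.2))) := by
    intro t
    rw [Matrix.smul_apply, vecProj_triVec, smul_eq_mul]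
    push_cast
    ring
  rw [Finset.sum_congr rfl (fun t _ => hsummand t),
    sum_prod3 (fun u => ((R1.w u : ℝ) : ℂ) * vecProj (R1.ψ u) (x.1.1, x.2.1.1) (y.1.1, y.2.1.1))
      (fun u => ((R2.w u : ℝ) : ℂ) * vecProj (R2.ψ u) (x.1.2, x.2.2.1) (y.1.2, y.2.2.1))
      (fun u => ((R3.w u : ℝ) : ℂ) * vecProj (R3.ψ u) (x.2.1.2, x.2.2.2) (y.2.1.2, y.2.2.2))]
  show triMat d v1 v2 v3 x y = _
  unfold triMat
  rw [R1.repr, R2.repr, R3.repr]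
  simp only [Matrix.sum_apply, Matrix.smul_apply, smul_eq_mul]

lemma triMat_bisep {d : ℕ} (hd : 0 < d) {v1 v2 v3 : ℝ} (R1 : LinkRepr d v1)
    (R2 : LinkRepr d v2) (R3 : LinkRepr d v3)
    (hcut : (R1.IsProd ∧ R2.IsProd) ∨ (R1.IsProd ∧ R3.IsProd) ∨ (R2.IsProd ∧ R3.IsProd)) :
    Bisep3 (triMat d v1 v2 v3) := by
  apply bisep3_of _ (R1.ι × R2.ι × R3.ι)
    (fun t => R1.w t.1 * (R2.w t.2.1 * R3.w t.2.2))
    (fun t => triVec (R1.ψ t.1) (R2.ψ t.2.1) (R3.ψ t.2.2))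
  · exact fun t => mul_nonneg (R1.nonneg _) (mul_nonneg (R2.nonneg _) (R3.nonneg _))
  · rw [sum_prod3, R1.wsum, R2.wsum, R3.wsum]; norm_num
  · intro t
    rcases hcut with ⟨h1, h2⟩ | ⟨h1, h3⟩ | ⟨h2, h3⟩
    · left
      obtain ⟨f1, g1, hfg1⟩ := h1 t.1
      obtain ⟨f2, g2, hfg2⟩ := h2 t.2.1
      refine ⟨fun a => f1 a.1 * f2 a.2,
        fun bc => g1 bc.1.1 * (R3.ψ t.2.2 (bc.1.2, bc.2.2) * g2 bc.2.1), ?_⟩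
      intro a b c
      show triVec _ _ _ (a, b, c) = _
      unfold triVec
      simp only
      rw [hfg1, hfg2]
      ring
    · right; left
      obtain ⟨f1, g1, hfg1⟩ := h1 t.1
      obtain ⟨f3, g3, hfg3⟩ := h3 t.2.2
      refine ⟨fun b => g1 b.1 * f3 b.2,
        fun ac => f1 ac.1.1 * (R2.ψ t.2.1 (ac.1.2, ac.2.1) * g3 ac.2.2), ?_⟩
      intro a b c
      show triVec _ _ _ (a, b, c) = _
      unfold triVec
      simp only
      rw [hfg1, hfg3]
      ring
    · right; right
      obtain ⟨f2, g2, hfg2⟩ := h2 t.2.1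
      obtain ⟨f3, g3, hfg3⟩ := h3 t.2.2
      refine ⟨fun c => g2 c.1 * g3 c.2,
        fun ab => R1.ψ t.1 (ab.1.1, ab.2.1) * (f2 ab.1.2 * f3 ab.2.2), ?_⟩
      intro a b c
      show triVec _ _ _ (a, b, c) = _
      unfold triVec
      simp only
      rw [hfg2, hfg3]
      ring
  · intro t
    have : ∀ x : Idx d, Complex.normSq (triVec (R1.ψ t.1) (R2.ψ t.2.1) (R3.ψ t.2.2) x)
        = Complex.normSq (R1.ψ t.1 (x.1.1, x.2.1.1)) *
            (Complex.normSq (R2.ψ t.2.1 (x.1.2, x.2.2.1)) *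
              Complex.normSq (R3.ψ t.2.2 (x.2.1.2, x.2.2.2))) := by
      intro x
      unfold triVec
      simp only [map_mul]
    rw [Finset.sum_congr rfl (fun x _ => this x),
      sum_links (fun u => Complex.normSq (R1.ψ t.1 u)) (fun u => Complex.normSq (R2.ψ t.2.1 u))
        (fun u => Complex.normSq (R3.ψ t.2.2 u)),
      R1.norm, R2.norm, R3.norm]
    norm_num
  · exact triMat_repr R1 R2 R3


def cw (p : ℝ) : Fin 7 → ℝ :=
  ![(1-p)^3, p*(1-p)^2/4, p*(1-p)^2/4, p*(1-p)^2/4,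
    p*(3-p)^2/12, p*(3-p)^2/12, p*(3-p)^2/12]

def TT (d : ℕ) (p : ℝ) : Fin 7 → Matrix (Idx d) (Idx d) ℂ :=
  ![triMat d 0 0 0, triMat d 0 0 1, triMat d 0 1 0, triMat d 1 0 0,
    triMat d (2*p/(3-p)) (2*p/(3-p)) 1, triMat d (2*p/(3-p)) 1 (2*p/(3-p)),
    triMat d 1 (2*p/(3-p)) (2*p/(3-p))]

set_option maxHeartbeats 1000000 in
lemma polyId (q X1 Y1 X2 Y2 X3 Y3 D : ℂ) (h3 : (3:ℂ) - q ≠ 0) :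
    (q*X1 + (1-q)*D*Y1) * ((q*X2 + (1-q)*D*Y2) * (q*X3 + (1-q)*D*Y3))
      = (1-q)^3 * ((0*X1 + (1-0)*D*Y1) * ((0*X2 + (1-0)*D*Y2) * (0*X3 + (1-0)*D*Y3)))
      + (q*(1-q)^2/4) * ((0*X1 + (1-0)*D*Y1) * ((0*X2 + (1-0)*D*Y2) * (1*X3 + (1-1)*D*Y3)))
      + (q*(1-q)^2/4) * ((0*X1 + (1-0)*D*Y1) * ((1*X2 + (1-1)*D*Y2) * (0*X3 + (1-0)*D*Y3)))
      + (q*(1-q)^2/4) * ((1*X1 + (1-1)*D*Y1) * ((0*X2 + (1-0)*D*Y2) * (0*X3 + (1-0)*D*Y3)))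
      + (q*(3-q)^2/12) * (((2*q/(3-q))*X1 + (1-(2*q/(3-q)))*D*Y1) * (((2*q/(3-q))*X2 + (1-(2*q/(3-q)))*D*Y2) * (1*X3 + (1-1)*D*Y3)))
      + (q*(3-q)^2/12) * (((2*q/(3-q))*X1 + (1-(2*q/(3-q)))*D*Y1) * ((1*X2 + (1-1)*D*Y2) * ((2*q/(3-q))*X3 + (1-(2*q/(3-q)))*D*Y3)))
      + (q*(3-q)^2/12) * ((1*X1 + (1-1)*D*Y1) * (((2*q/(3-q))*X2 + (1-(2*q/(3-q)))*D*Y2) * ((2*q/(3-q))*X3 + (1-(2*q/(3-q)))*D*Y3))) := by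
  have hF : ∀ X Y : ℂ, (3-q) * ((2*q/(3-q))*X + (1-(2*q/(3-q)))*D*Y)
      = 2*q*X + 3*(1-q)*D*Y := by
    intro X Y
    have hq : (3 - q) * (2 * q / (3 - q)) = 2 * q := by
      rw [mul_comm, div_mul_cancel₀ _ h3]
    linear_combination (X - D * Y) * hq
  have h4 : (q*(3-q)^2/12) * (((2*q/(3-q))*X1 + (1-(2*q/(3-q)))*D*Y1) * (((2*q/(3-q))*X2 + (1-(2*q/(3-q)))*D*Y2) * (1*X3 + (1-1)*D*Y3)))
      = q/12 * (((3-q) * ((2*q/(3-q))*X1 + (1-(2*q/(3-q)))*D*Y1)) * (((3-q) * ((2*q/(3-q))*X2 + (1-(2*q/(3-q)))*D*Y2)) * (1*X3 + (1-1)*D*Y3))) := by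
    ring
  have h5 : (q*(3-q)^2/12) * (((2*q/(3-q))*X1 + (1-(2*q/(3-q)))*D*Y1) * ((1*X2 + (1-1)*D*Y2) * ((2*q/(3-q))*X3 + (1-(2*q/(3-q)))*D*Y3)))
      = q/12 * (((3-q) * ((2*q/(3-q))*X1 + (1-(2*q/(3-q)))*D*Y1)) * ((1*X2 + (1-1)*D*Y2) * ((3-q) * ((2*q/(3-q))*X3 + (1-(2*q/(3-q)))*D*Y3)))) := by
    ring
  have h6 : (q*(3-q)^2/12) * ((1*X1 + (1-1)*D*Y1) * (((2*q/(3-q))*X2 + (1-(2*q/(3-q)))*D*Y2) * ((2*q/(3-q))*X3 + (1-(2*q/(3-q)))*D*Y3)))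
      = q/12 * ((1*X1 + (1-1)*D*Y1) * (((3-q) * ((2*q/(3-q))*X2 + (1-(2*q/(3-q)))*D*Y2)) * ((3-q) * ((2*q/(3-q))*X3 + (1-(2*q/(3-q)))*D*Y3)))) := by
    ring
  rw [h4, h5, h6, hF X1 Y1, hF X2 Y2, hF X3 Y3]
  ring


set_option maxHeartbeats 2000000 in
lemma triMat_decomp (d : ℕ) (p : ℝ) (h3 : (3:ℝ) - p ≠ 0) :
    triMat d p p p = ∑ i : Fin 7, ((cw p i : ℝ) : ℂ) • TT d p i := by
  have h3c : ((3:ℝ) - p : ℝ) ≠ 0 := h3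
  have h3c' : (3:ℂ) - (p:ℝ) ≠ 0 := by
    intro h
    apply h3c
    have := congrArg Complex.re h
    simpa using this
  apply Matrix.ext
  intro x y
  rw [Matrix.sum_apply, Fin.sum_univ_seven]
  rw [show TT d p 0 = triMat d 0 0 0 from rfl, show TT d p 1 = triMat d 0 0 1 from rfl,
    show TT d p 2 = triMat d 0 1 0 from rfl, show TT d p 3 = triMat d 1 0 0 from rfl,
    show TT d p 4 = triMat d (2*p/(3-p)) (2*p/(3-p)) 1 from rfl,
    show TT d p 5 = triMat d (2*p/(3-p)) 1 (2*p/(3-p)) from rfl,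
    show TT d p 6 = triMat d 1 (2*p/(3-p)) (2*p/(3-p)) from rfl,
    show cw p 0 = (1-p)^3 from rfl, show cw p 1 = p*(1-p)^2/4 from rfl,
    show cw p 2 = p*(1-p)^2/4 from rfl, show cw p 3 = p*(1-p)^2/4 from rfl,
    show cw p 4 = p*(3-p)^2/12 from rfl, show cw p 5 = p*(3-p)^2/12 from rfl,
    show cw p 6 = p*(3-p)^2/12 from rfl]
  simp only [Matrix.smul_apply, smul_eq_mul]
  simp only [triMat]
  generalize (x.1.1, x.2.1.1) = u1
  generalize (y.1.1, y.2.1.1) = v1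
  generalize (x.1.2, x.2.2.1) = u2
  generalize (y.1.2, y.2.2.1) = v2
  generalize (x.2.1.2, x.2.2.2) = u3
  generalize (y.2.1.2, y.2.2.2) = v3
  simp only [iso_apply]
  generalize (if u1.1 = u1.2 ∧ v1.1 = v1.2 then ((d:ℂ))⁻¹ else 0) = X1
  generalize (if u2.1 = u2.2 ∧ v2.1 = v2.2 then ((d:ℂ))⁻¹ else 0) = X2
  generalize (if u3.1 = u3.2 ∧ v3.1 = v3.2 then ((d:ℂ))⁻¹ else 0) = X3
  generalize (if u1 = v1 then (1:ℂ) else 0) = Y1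
  generalize (if u2 = v2 then (1:ℂ) else 0) = Y2
  generalize (if u3 = v3 then (1:ℂ) else 0) = Y3
  generalize ((((d:ℂ)) ^ 2)⁻¹) = D
  push_cast
  linear_combination polyId (p:ℝ) X1 Y1 X2 Y2 X3 Y3 D h3c'

end PEN

/-- For `d ≥ 2`, if `p ≤ 3/(3 + 2d)`, then the `d`-dimensional triangle PEN state
`σ_cc(p)` is biseparable with respect to the tripartition `A|B|C`. -/
theorem sigmaCC_biseparable (d : ℕ) (hd : 2 ≤ d) (p : ℝ) (hp0 : 0 ≤ p)
    (hp : p ≤ 3 / (3 + 2 * (d : ℝ))) :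
    Bisep3 (sigmaCC d p) := by
  have hd0 : 0 < d := by omega
  have hdR : (2:ℝ) ≤ (d:ℝ) := by exact_mod_cast hd
  have hden : (0:ℝ) < 3 + 2 * (d:ℝ) := by linarith
  have hp23 : p * (3 + 2 * (d:ℝ)) ≤ 3 := by
    rw [le_div_iff₀ hden] at hp
    exact hp
  have hp1 : p ≤ 1 := by nlinarith
  have h3p : (0:ℝ) < 3 - p := by linarith
  have hs0 : 0 ≤ 2 * p / (3 - p) := div_nonneg (by linarith) h3p.le
  have hsle : (2 * p / (3 - p)) * ((d:ℝ) + 1) ≤ 1 := by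
    rw [div_mul_eq_mul_div, div_le_one h3p]
    nlinarith
  have h0le : (0:ℝ) * ((d:ℝ) + 1) ≤ 1 := by norm_num
  have hsig : sigmaCC d p = PEN.triMat d p p p := rfl
  rw [hsig, PEN.triMat_decomp d p h3p.ne']
  apply PEN.bisep3_convex 7 (PEN.cw p) (PEN.TT d p)
  · intro i
    fin_cases i
    · exact pow_nonneg (by linarith) 3
    · exact div_nonneg (mul_nonneg hp0 (sq_nonneg _)) (by norm_num)
    · exact div_nonneg (mul_nonneg hp0 (sq_nonneg _)) (by norm_num)
    · exact div_nonneg (mul_nonneg hp0 (sq_nonneg _)) (by norm_num)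
    · exact div_nonneg (mul_nonneg hp0 (sq_nonneg _)) (by norm_num)
    · exact div_nonneg (mul_nonneg hp0 (sq_nonneg _)) (by norm_num)
    · exact div_nonneg (mul_nonneg hp0 (sq_nonneg _)) (by norm_num)
  · rw [Fin.sum_univ_seven,
      show PEN.cw p 0 = (1-p)^3 from rfl, show PEN.cw p 1 = p*(1-p)^2/4 from rfl,
      show PEN.cw p 2 = p*(1-p)^2/4 from rfl, show PEN.cw p 3 = p*(1-p)^2/4 from rfl,
      show PEN.cw p 4 = p*(3-p)^2/12 from rfl, show PEN.cw p 5 = p*(3-p)^2/12 from rfl,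
      show PEN.cw p 6 = p*(3-p)^2/12 from rfl]
    ring
  · intro i
    let RS := PEN.sepRepr d hd0 (2 * p / (3 - p)) hs0 hsle
    let R0 := PEN.sepRepr d hd0 0 le_rfl h0le
    let R1 := PEN.mixRepr d hd0 1 (by norm_num) le_rfl
    have hRS := PEN.sepRepr_isProd d hd0 (2 * p / (3 - p)) hs0 hsle
    have hR0 := PEN.sepRepr_isProd d hd0 0 le_rfl h0le
    fin_cases i
    · exact PEN.triMat_bisep hd0 R0 R0 R0 (Or.inl ⟨hR0, hR0⟩)
    · exact PEN.triMat_bisep hd0 R0 R0 R1 (Or.inl ⟨hR0, hR0⟩)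
    · exact PEN.triMat_bisep hd0 R0 R1 R0 (Or.inr (Or.inl ⟨hR0, hR0⟩))
    · exact PEN.triMat_bisep hd0 R1 R0 R0 (Or.inr (Or.inr ⟨hR0, hR0⟩))
    · exact PEN.triMat_bisep hd0 RS RS R1 (Or.inl ⟨hRS, hRS⟩)
    · exact PEN.triMat_bisep hd0 RS R1 RS (Or.inr (Or.inl ⟨hRS, hRS⟩))
    · exact PEN.triMat_bisep hd0 R1 RS RS (Or.inr (Or.inr ⟨hRS, hRS⟩))
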